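/- Let P be a substochastic matrix on a countable set Λ with c := sup_{x∈Λ} (1 − Σ_{y∈Λ} P(x,y)) < 1, and suppose there exists z ∈ Λ with δ_z := inf_{x∈Λ} P(x,z) > 0. Then P^{n+1}(z,z) ≥ (1−c)^n δ_z for every n ≥ 0, and consequently liminf_{n→∞} (P^n(z,z))^{1/n} ≥ 1 − c. (This is the discrete form of the paper's bound γ ≤ C on the decay parameter in the proof of Theorem 2.3: the exponential decay rate is at most the maximal killing rate.) -/

import Mathlib

/-!
Each step of a chain with killing rate at most `c` keeps at least the fraction `1 - c` of its
mass, so every row of `Pⁿ` has mass at least `(1 - c)ⁿ`. Since every state enters `z` with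
probability at least `δ_z`, `P^{n+1}(z,z) = ∑_w Pⁿ(z,w) P(w,z) ≥ (1 - c)ⁿ δ_z`. Taking `n`-th
roots of `P^{n+1}(z,z) ≥ (1 - c)^{n+1} K` with `K = δ_z / (1 - c) > 0` gives the liminf bound,
because `K^{1/n} → 1`.
-/

open Filter Topology

/-- Powers of a matrix indexed by a countable set: `matPow P 0 = Id`,
`matPow P (n+1) x y = ∑ z, matPow P n x z * P z y`. -/
noncomputable def matPow {Λ : Type*} [DecidableEq Λ] (P : Λ → Λ → ℝ) : ℕ → Λ → Λ → ℝ
  | 0 => fun x y => if x = y then 1 else 0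
  | n + 1 => fun x y => ∑' z, matPow P n x z * P z y

structure IsSubstochastic {Λ : Type*} (P : Λ → Λ → ℝ) : Prop where
  nonneg : ∀ x y, 0 ≤ P x y
  summable : ∀ x, Summable (P x)
  tsum_le_one : ∀ x, ∑' y, P x y ≤ 1

namespace IsSubstochastic

variable {Λ : Type*} {P : Λ → Λ → ℝ}

lemma le_one (hP : IsSubstochastic P) (x y : Λ) : P x y ≤ 1 :=
  ((hP.summable x).le_tsum y fun w _ => hP.nonneg x w).trans (hP.tsum_le_one x)

lemma one_sub_iSup_le_tsum (hP : IsSubstochastic P) (x : Λ) :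
    1 - ⨆ x, (1 - ∑' y, P x y) ≤ ∑' y, P x y := by
  have hbdd : BddAbove (Set.range fun x => 1 - ∑' y, P x y) :=
    ⟨1, by rintro _ ⟨x, rfl⟩; exact sub_le_self 1 (tsum_nonneg (hP.nonneg x))⟩
  linarith [le_ciSup hbdd x]

lemma one [DecidableEq Λ] : IsSubstochastic (fun x y : Λ => if x = y then (1 : ℝ) else 0) := by
  have h (x : Λ) : HasSum (fun y => if x = y then (1 : ℝ) else 0) 1 := by
    simpa using hasSum_single (f := fun y => if x = y then (1 : ℝ) else 0) x
      fun y hy => if_neg (Ne.symm hy)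
  exact ⟨fun x y => by split_ifs <;> norm_num, fun x => (h x).summable, fun x => (h x).tsum_eq.le⟩

variable {v : Λ → ℝ}

lemma mul_tsum_le (hP : IsSubstochastic P) (hv0 : ∀ w, 0 ≤ v w) (w : Λ) :
    v w * ∑' y, P w y ≤ v w :=
  mul_le_of_le_one_right (hv0 w) (hP.tsum_le_one w)

lemma summable_mul_tsum (hP : IsSubstochastic P) (hv0 : ∀ w, 0 ≤ v w) (hv : Summable v) :
    Summable fun w => v w * ∑' y, P w y :=
  hv.of_nonneg_of_le (fun w => mul_nonneg (hv0 w) (tsum_nonneg (hP.nonneg w)))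
    (hP.mul_tsum_le hv0)

lemma summable_uncurry_vecMul (hP : IsSubstochastic P) (hv0 : ∀ w, 0 ≤ v w)
    (hv : Summable v) : Summable (Function.uncurry fun w y => v w * P w y) := by
  have h0 : 0 ≤ Function.uncurry fun w y => v w * P w y :=
    fun p => mul_nonneg (hv0 p.1) (hP.nonneg p.1 p.2)
  refine (summable_prod_of_nonneg h0).2 ⟨fun w => (hP.summable w).mul_left (v w), ?_⟩
  simpa only [Function.uncurry_apply_pair, tsum_mul_left] using hP.summable_mul_tsum hv0 hv

lemma summable_vecMul (hP : IsSubstochastic P) (hv0 : ∀ w, 0 ≤ v w) (hv : Summable v) :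
    Summable fun y => ∑' w, v w * P w y :=
  (hP.summable_uncurry_vecMul hv0 hv).prod_symm.prod

lemma tsum_vecMul (hP : IsSubstochastic P) (hv0 : ∀ w, 0 ≤ v w) (hv : Summable v) :
    ∑' y, ∑' w, v w * P w y = ∑' w, v w * ∑' y, P w y := by
  simp_rw [(hP.summable_uncurry_vecMul hv0 hv).tsum_comm, tsum_mul_left]

lemma mul {Q : Λ → Λ → ℝ} (hP : IsSubstochastic P) (hQ : IsSubstochastic Q) :
    IsSubstochastic fun x y => ∑' w, P x w * Q w y where
  nonneg x y := tsum_nonneg fun w => mul_nonneg (hP.nonneg x w) (hQ.nonneg w y)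
  summable x := hQ.summable_vecMul (hP.nonneg x) (hP.summable x)
  tsum_le_one x := by
    rw [hQ.tsum_vecMul (hP.nonneg x) (hP.summable x)]
    exact ((hQ.summable_mul_tsum (hP.nonneg x) (hP.summable x)).tsum_mono (hP.summable x)
      (hQ.mul_tsum_le (hP.nonneg x))).trans (hP.tsum_le_one x)

lemma pow [DecidableEq Λ] (hP : IsSubstochastic P) (n : ℕ) :
    IsSubstochastic (matPow P n) := by
  induction n with
  | zero => exact one
  | succ n ih => exact ih.mul hP

end IsSubstochastic

section MatPow

variable {Λ : Type*} [DecidableEq Λ] {P : Λ → Λ → ℝ}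

lemma pow_le_tsum_matPow (hP : IsSubstochastic P) {r : ℝ} (hr : 0 ≤ r)
    (hrow : ∀ x, r ≤ ∑' y, P x y) (n : ℕ) (x : Λ) : r ^ n ≤ ∑' y, matPow P n x y := by
  induction n with
  | zero => simp [matPow]
  | succ n ih =>
    have hQ := hP.pow n
    calc r ^ (n + 1) = r ^ n * r := pow_succ r n
      _ ≤ (∑' w, matPow P n x w) * r := mul_le_mul_of_nonneg_right ih hr
      _ = ∑' w, matPow P n x w * r := tsum_mul_right.symm
      _ ≤ ∑' w, matPow P n x w * ∑' y, P w y :=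
          ((hQ.summable x).mul_right r).tsum_mono (hP.summable_mul_tsum (hQ.nonneg x)
            (hQ.summable x)) fun w => mul_le_mul_of_nonneg_left (hrow w) (hQ.nonneg x w)
      _ = ∑' y, matPow P (n + 1) x y := (hP.tsum_vecMul (hQ.nonneg x) (hQ.summable x)).symm

lemma mul_tsum_le_matPow_succ (hP : IsSubstochastic P) {δ : ℝ} {z : Λ} (hδ : ∀ w, δ ≤ P w z)
    (n : ℕ) (x : Λ) : (∑' w, matPow P n x w) * δ ≤ matPow P (n + 1) x z := by
  have hQ := hP.pow n
  rw [← tsum_mul_right]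
  refine ((hQ.summable x).mul_right δ).tsum_mono ?_ fun w => ?_
  · exact (hQ.summable x).of_nonneg_of_le (fun w => mul_nonneg (hQ.nonneg x w) (hP.nonneg w z))
      fun w => mul_le_of_le_one_right (hQ.nonneg x w) (hP.le_one w z)
  · exact mul_le_mul_of_nonneg_left (hδ w) (hQ.nonneg x w)

end MatPow

lemma tendsto_rpow_inv_natCast_nhds_one {K : ℝ} (hK : 0 < K) :
    Tendsto (fun n : ℕ => K ^ (n : ℝ)⁻¹) atTop (𝓝 1) := by
  have h := (Real.continuousAt_const_rpow hK.ne').tendsto.comp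
    (tendsto_inv_atTop_zero.comp tendsto_natCast_atTop_atTop)
  rwa [Real.rpow_zero] at h

lemma le_liminf_rpow_inv_of_pow_mul_le {u : ℕ → ℝ} {r K : ℝ} (hr : 0 ≤ r) (hK : 0 < K)
    (hu : ∀ n, u n ≤ 1) (hlow : ∀ᶠ n in atTop, r ^ n * K ≤ u n) :
    r ≤ liminf (fun n : ℕ => u n ^ (n : ℝ)⁻¹) atTop := by
  have hlim : Tendsto (fun n : ℕ => r * K ^ (n : ℝ)⁻¹) atTop (𝓝 r) := by
    simpa using (tendsto_rpow_inv_natCast_nhds_one hK).const_mul r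
  have hle : ∀ᶠ n : ℕ in atTop, r * K ^ (n : ℝ)⁻¹ ≤ u n ^ (n : ℝ)⁻¹ := by
    filter_upwards [hlow, eventually_ne_atTop 0] with n hn hn0
    calc r * K ^ (n : ℝ)⁻¹ = (r ^ n * K) ^ (n : ℝ)⁻¹ := by
          rw [Real.mul_rpow (by positivity) hK.le, Real.pow_rpow_inv_natCast hr hn0]
      _ ≤ u n ^ (n : ℝ)⁻¹ := Real.rpow_le_rpow (by positivity) hn (by positivity)
  have hbdd : ∀ᶠ n : ℕ in atTop, u n ^ (n : ℝ)⁻¹ ≤ 1 := by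
    filter_upwards [hlow] with n hn
    exact Real.rpow_le_one ((by positivity : 0 ≤ r ^ n * K).trans hn) (hu n) (by positivity)
  rw [← hlim.liminf_eq]
  exact liminf_le_liminf hle hlim.isBoundedUnder_ge (isCoboundedUnder_ge_of_eventually_le _ hbdd)

theorem decay_rate_at_most_killing_rate_general
    {Λ : Type*} [DecidableEq Λ]
    (P : Λ → Λ → ℝ)
    -- substochastic
    (hP0 : ∀ x y, 0 ≤ P x y)
    (hPsum : ∀ x, Summable (P x))
    (hP1 : ∀ x, ∑' y, P x y ≤ 1)
    (z : Λ)
    (hδz : 0 < ⨅ x, P x z)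
    (hc : (⨆ x, (1 - ∑' y, P x y)) < 1) :
    (∀ n : ℕ, (1 - ⨆ x, (1 - ∑' y, P x y)) ^ n * (⨅ x, P x z)
        ≤ matPow P (n + 1) z z) ∧
    (1 - ⨆ x, (1 - ∑' y, P x y))
        ≤ Filter.liminf (fun n : ℕ => (matPow P n z z) ^ ((n : ℝ)⁻¹)) atTop := by
  set c := ⨆ x, (1 - ∑' y, P x y)
  set δ := ⨅ x, P x z
  have hP : IsSubstochastic P := ⟨hP0, hPsum, hP1⟩
  have hr : 0 < 1 - c := by linarith
  have hδ (x : Λ) : δ ≤ P x z := ciInf_le ⟨0, by rintro _ ⟨x, rfl⟩; exact hP0 x z⟩ x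
  have hlow (n : ℕ) : (1 - c) ^ n * δ ≤ matPow P (n + 1) z z :=
    (mul_le_mul_of_nonneg_right (pow_le_tsum_matPow hP hr.le hP.one_sub_iSup_le_tsum n z) hδz.le).trans
      (mul_tsum_le_matPow_succ hP hδ n z)
  refine ⟨hlow, le_liminf_rpow_inv_of_pow_mul_le hr.le (div_pos hδz hr)
    (fun n => (hP.pow n).le_one z z) ?_⟩
  filter_upwards [eventually_ne_atTop 0] with n hn
  obtain ⟨m, rfl⟩ := Nat.exists_eq_succ_of_ne_zero hn
  calc (1 - c) ^ (m + 1) * (δ / (1 - c)) = (1 - c) ^ m * δ := by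
        field_simp
        ring
    _ ≤ _ := hlow m

/-- if the maximal killing `c = sup_x (1 − Σ_y P(x,y))` satisfies `c < 1`
and there is a state `z` with `δ_z = inf_x P(x,z) > 0`, then
`P^{n+1}(z,z) ≥ (1−c)ⁿ δ_z`, and consequently
`liminf_n (Pⁿ(z,z))^{1/n} ≥ 1 − c`. -/
theorem decay_rate_at_most_killing_rate
    {Λ : Type*} [Countable Λ] [Nonempty Λ] [DecidableEq Λ]
    (P : Λ → Λ → ℝ)
    -- substochastic
    (hP0 : ∀ x y, 0 ≤ P x y)
    (hPsum : ∀ x, Summable (P x))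
    (hP1 : ∀ x, ∑' y, P x y ≤ 1)
    (z : Λ)
    (hδz : 0 < ⨅ x, P x z)
    (hc : (⨆ x, (1 - ∑' y, P x y)) < 1) :
    (∀ n : ℕ, (1 - ⨆ x, (1 - ∑' y, P x y)) ^ n * (⨅ x, P x z)
        ≤ matPow P (n + 1) z z) ∧
    (1 - ⨆ x, (1 - ∑' y, P x y))
        ≤ Filter.liminf (fun n : ℕ => (matPow P n z z) ^ ((n : ℝ)⁻¹)) atTop :=
  decay_rate_at_most_killing_rate_general P hP0 hPsum hP1 z hδz hc
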